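/- Let 𝕃 be a linear subspace of ℝ^n, D a finite family of nonzero vectors in 𝕃, and k an integer with 1 ≤ k ≤ |D|. The following statements are equivalent: (i) D is a positive k-spanning set of 𝕃; (ii) for every nonzero vector u ∈ 𝕃 there exist k elements d_1,…,d_k of D (counted with multiplicity) such that uᵀd_i > 0 for all i = 1,…,k; (iii) span_k(D) = 𝕃 and, for every subfamily S ⊆ D of cardinality |D| - k + 1, the zero vector can be written as a linear combination of the elements of S with all coefficients strictly positive. -/

import Mathlib

open scoped RealInnerProductSpace

noncomputable section

/-- Shorthand for the Euclidean space `ℝ^n`. -/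
abbrev Euc (n : ℕ) := EuclideanSpace ℝ (Fin n)

/-- The positive span of a finite family of vectors: the set of all
linear combinations with nonnegative coefficients. -/
def pspan {n : ℕ} {ι : Type*} [Fintype ι] (D : ι → Euc n) : Set (Euc n) :=
  { x | ∃ c : ι → ℝ, (∀ i, 0 ≤ c i) ∧ x = ∑ i, c i • D i }

/-- `D` is a positive spanning set (PSS) of the subspace `L`. -/
def IsPSS {n : ℕ} {ι : Type*} [Fintype ι] (D : ι → Euc n)
    (L : Submodule ℝ (Euc n)) : Prop :=
  pspan D = (L : Set (Euc n))

/-- `D` is a positive basis of `L`: a PSS of `L` such that removing any single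
element (one instance of it) destroys the positive spanning property. -/
def IsPosBasis {n : ℕ} {ι : Type*} [Fintype ι] [DecidableEq ι] (D : ι → Euc n)
    (L : Submodule ℝ (Euc n)) : Prop :=
  IsPSS D L ∧ ∀ i : ι, ¬ IsPSS (fun j : {j : ι // j ≠ i} => D j) L

/-- `D` is a minimal positive basis of `L`: a positive basis with `dim L + 1` elements. -/
def IsMinPosBasis {n : ℕ} {ι : Type*} [Fintype ι] [DecidableEq ι] (D : ι → Euc n)
    (L : Submodule ℝ (Euc n)) : Prop :=
  IsPosBasis D L ∧ Fintype.card ι = Module.finrank ℝ L + 1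

/-- The positive `k`-span of a finite family `D`: the intersection of the positive
spans of all of its subfamilies of cardinality at least `|D| - k + 1`. -/
def pspanK {n : ℕ} {ι : Type*} [Fintype ι] (k : ℕ) (D : ι → Euc n) : Set (Euc n) :=
  ⋂ (S : Finset ι) (_ : Fintype.card ι - k + 1 ≤ S.card),
    pspan (fun j : {j : ι // j ∈ S} => D (j : ι))

/-- `D` is a positive `k`-spanning set (PkSS) of `L`. -/
def IsPkSS {n : ℕ} {ι : Type*} [Fintype ι] (k : ℕ) (D : ι → Euc n)
    (L : Submodule ℝ (Euc n)) : Prop :=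
  pspanK k D = (L : Set (Euc n))

/-- The `k`-span of a finite family `D`: the intersection of the linear spans of
all of its subfamilies of cardinality at least `|D| - k + 1`. -/
def spanK {n : ℕ} {ι : Type*} [Fintype ι] (k : ℕ) (D : ι → Euc n) : Set (Euc n) :=
  ⋂ (S : Finset ι) (_ : Fintype.card ι - k + 1 ≤ S.card),
    (Submodule.span ℝ (D '' (S : Set ι)) : Set (Euc n))

/-- `D` is a positive `k`-basis of `L`: a PkSS of `L` such that removing any single
element destroys the positive `k`-spanning property. -/
def IsPkBasis {n : ℕ} {ι : Type*} [Fintype ι] [DecidableEq ι] (k : ℕ) (D : ι → Euc n)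
    (L : Submodule ℝ (Euc n)) : Prop :=
  IsPkSS k D L ∧ ∀ i : ι, ¬ IsPkSS k (fun j : {j : ι // j ≠ i} => D j) L

/-- The cosine measure of a finite family of nonzero vectors. -/
def cosm {n : ℕ} {ι : Type*} [Fintype ι] (D : ι → Euc n) : ℝ :=
  ⨅ u : {u : Euc n // ‖u‖ = 1}, ⨆ i : ι, ⟪(u : Euc n), D i⟫ / ‖D i‖

/-- The `k`-cosine measure of a finite family of nonzero vectors. -/
def cosmK {n : ℕ} {ι : Type*} [Fintype ι] (k : ℕ) (D : ι → Euc n) : ℝ :=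
  ⨅ u : {u : Euc n // ‖u‖ = 1},
    ⨆ S : {S : Finset ι // S.card = k},
      ⨅ j : {j : ι // j ∈ (S : Finset ι)}, ⟪(u : Euc n), D (j : ι)⟫ / ‖D (j : ι)‖

/-- The cosine vector set: the unit vectors attaining the cosine measure. -/
def cosVSet {n : ℕ} {ι : Type*} [Fintype ι] (D : ι → Euc n) : Set (Euc n) :=
  { u | ‖u‖ = 1 ∧ (⨆ i : ι, ⟪u, D i⟫ / ‖D i‖) = cosm D }

/-- `D` is orthogonally structured with decomposition given by the pairwise orthogonal
subspaces `L i` (whose sum is `ℝ^n`) and the grouping map `g`: the subfamily of `D`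
corresponding to each fiber of `g` is a minimal positive basis of the associated subspace. -/
def IsOSPBDecomp {n s : ℕ} {ι : Type*} [Fintype ι] [DecidableEq ι] (D : ι → Euc n)
    (L : Fin s → Submodule ℝ (Euc n)) (g : ι → Fin s) : Prop :=
  (∀ i i' : Fin s, i ≠ i' → ∀ x ∈ L i, ∀ y ∈ L i', ⟪x, y⟫ = 0) ∧
  (⨆ i, L i) = (⊤ : Submodule ℝ (Euc n)) ∧
  ∀ i : Fin s, IsMinPosBasis (fun j : {j : ι // g j = i} => D (j : ι)) (L i)

/-- The Gram matrix `G(B) = BᵀB` of the subfamily of `D` indexed by `S`. -/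
def gramSub {n : ℕ} {ι : Type*} [Fintype ι] (D : ι → Euc n) (S : Finset ι) :
    Matrix {j : ι // j ∈ S} {j : ι // j ∈ S} ℝ :=
  Matrix.of fun j j' => ⟪D (j : ι), D (j' : ι)⟫

/-- The quantity `γ_B = 1/√(1ᵀ G(B)⁻¹ 1)` associated with the subfamily of `D`
indexed by `S`. -/
def gammaSub {n : ℕ} {ι : Type*} [Fintype ι] [DecidableEq ι] (D : ι → Euc n)
    (S : Finset ι) : ℝ :=
  1 / Real.sqrt (∑ j : {j : ι // j ∈ S}, ∑ j' : {j : ι // j ∈ S}, (gramSub D S)⁻¹ j j')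

/-- The subfamily of `D` indexed by `S` is a linear basis of `L`. -/
def IsBasisSub {n : ℕ} {ι : Type*} [Fintype ι] (D : ι → Euc n) (S : Finset ι)
    (L : Submodule ℝ (Euc n)) : Prop :=
  LinearIndependent ℝ (fun j : {j : ι // j ∈ S} => D (j : ι)) ∧
  Submodule.span ℝ (D '' (S : Set ι)) = L

/-- `R` is a rotation matrix: `RᵀR = I` and `det R = 1`. -/
def IsRotation {n : ℕ} (R : Matrix (Fin n) (Fin n) ℝ) : Prop :=
  R.transpose * R = 1 ∧ R.det = 1

/-- Action of an `n × n` matrix on the Euclidean space `ℝ^n`. -/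
def rotAct {n : ℕ} (R : Matrix (Fin n) (Fin n) ℝ) (x : Euc n) : Euc n :=
  Matrix.toEuclideanLin R x

/-- The quantity `ρ_D` of Lemma 4.13, where `P i i'` denotes the orthogonal projection
of `d_i` onto `L ∩ {v_{i'}}^⊥`. -/
def rhoQ {n : ℕ} {ι : Type*} [Fintype ι] (D : ι → Euc n) (P : ι → ι → Euc n) : ℝ :=
  ⨆ p : ι × ι, ⟪D p.1, P p.1 p.2⟫ / (‖D p.1‖ * ‖P p.1 p.2‖)

/-!
For a family `F` in `L`, `L ⊆ pspan F` holds iff every nonzero `u ∈ L` has a positive inner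
product with some `F i`: one direction expands `⟪u, u⟫` along `F`; for the other, the cone
`pspan F` is closed (conic Carathéodory: it is a finite union of cones over linearly independent
subfamilies), so a point of `L` outside it is separated from it by a hyperplane, whose normal,
projected onto `L`, has nonpositive inner product with every `F i`. Likewise `L ⊆ pspan F` iff
`F` spans `L` and `0` is a strictly positive combination of `F`. Since `D` is a PkSS of `L`
exactly when `L ⊆ pspan S` for every subfamily `S` of at least `|D| - k + 1` members, and a set
of indices meets every such `S` iff it has at least `k` elements, both characterizations follow.
-/

section PositiveSpan

variable {n : ℕ} {κ : Type*} [Fintype κ]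

theorem pspan_eq_hull (F : κ → Euc n) : pspan F = PointedCone.hull ℝ (Set.range F) := by
  ext x
  simp only [pspan, Set.mem_ofPred_eq, SetLike.mem_coe, Submodule.mem_span_range_iff_exists_fun]
  constructor
  · rintro ⟨c, hc, rfl⟩
    exact ⟨fun i => ⟨c i, hc i⟩, rfl⟩
  · rintro ⟨c, rfl⟩
    exact ⟨fun i => c i, fun i => (c i).2, rfl⟩

theorem isClosed_pspan_of_linearIndependent {F : κ → Euc n} (hF : LinearIndependent ℝ F) :
    IsClosed (pspan F) := by
  have himage : pspan F = Fintype.linearCombination ℝ F '' Set.Ici 0 := by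
    ext x
    simp only [pspan, Set.mem_ofPred_eq, Set.mem_image, Set.mem_Ici, Pi.le_def, Pi.zero_apply,
      Fintype.linearCombination_apply, eq_comm (a := x)]
  have hinj : LinearMap.ker (Fintype.linearCombination ℝ F) = ⊥ :=
    LinearMap.ker_eq_bot.mpr (linearIndependent_iff_injective_fintypeLinearCombination.mp hF)
  rw [himage]
  exact (LinearMap.isClosedEmbedding_of_injective hinj).isClosedMap _ isClosed_Ici

theorem exists_pos_of_not_linearIndependent {M : Type*} [AddCommGroup M] [Module ℝ M]
    {F : κ → M} (hF : ¬ LinearIndependent ℝ F) :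
    ∃ a : κ → ℝ, ∑ i, a i • F i = 0 ∧ ∃ i, 0 < a i := by
  obtain ⟨g, hg, i, hgi⟩ := Fintype.not_linearIndependent_iff.mp hF
  rcases hgi.lt_or_gt with hneg | hpos
  · exact ⟨-g, by simp [neg_smul, hg], i, by simpa using hneg⟩
  · exact ⟨g, hg, i, hpos⟩

theorem pspan_eq_iUnion_pspan_ne [DecidableEq κ] {F : κ → Euc n}
    (hF : ¬ LinearIndependent ℝ F) :
    pspan F = ⋃ i : κ, pspan (fun j : {j : κ // j ≠ i} => F j) := by
  refine subset_antisymm ?_ (Set.iUnion_subset fun i => ?_)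
  · rintro x ⟨c, hc, rfl⟩
    obtain ⟨a, ha, i₀, hai₀⟩ := exists_pos_of_not_linearIndependent hF
    obtain ⟨b, hb, hbmin⟩ := Finset.exists_min_image (Finset.univ.filter (0 < a ·))
      (fun i => c i / a i) ⟨i₀, by simpa using hai₀⟩
    have hab : 0 < a b := by simpa using hb
    -- Moving along the relation `a` until the first coefficient vanishes keeps `x` fixed.
    set t := c b / a b
    have hc' : ∀ j, 0 ≤ c j - t * a j := by
      intro j
      rcases lt_or_ge 0 (a j) with haj | haj
      · have := hbmin j (by simpa using haj)
        rw [le_div_iff₀ haj] at this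
        linarith
      · nlinarith [hc j, div_nonneg (hc b) hab.le]
    have hx : ∑ j, c j • F j = ∑ j, (c j - t * a j) • F j := by
      simp [sub_smul, mul_smul, Finset.sum_sub_distrib, ← Finset.smul_sum, ha]
    refine Set.mem_iUnion.mpr ⟨b, ?_⟩
    rw [pspan_eq_hull, hx]
    refine Submodule.sum_mem _ fun j _ => ?_
    by_cases hjb : j = b
    · subst hjb
      simp [t, div_mul_cancel₀ _ hab.ne']
    · exact PointedCone.smul_mem _ (hc' j) (PointedCone.subset_hull ⟨⟨j, hjb⟩, rfl⟩)
  · rw [pspan_eq_hull, pspan_eq_hull]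
    exact Submodule.span_mono (Set.range_comp_subset_range _ F)

theorem isClosed_pspan (F : κ → Euc n) : IsClosed (pspan F) := by
  classical
  induction hN : Fintype.card κ generalizing κ with
  | zero =>
    have : IsEmpty κ := Fintype.card_eq_zero_iff.mp hN
    exact isClosed_pspan_of_linearIndependent linearIndependent_empty_type
  | succ N ih =>
    by_cases hF : LinearIndependent ℝ F
    · exact isClosed_pspan_of_linearIndependent hF
    rw [pspan_eq_iUnion_pspan_ne hF]
    refine isClosed_iUnion_of_finite fun i => ih _ ?_
    simp [Fintype.card_subtype_compl, hN]

theorem pspan_subset_span (F : κ → Euc n) :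
    pspan F ⊆ Submodule.span ℝ (Set.range F) := by
  rw [pspan_eq_hull]
  exact PointedCone.hull_le_span ℝ _

theorem exists_inner_pos_of_mem_pspan {F : κ → Euc n} {u : Euc n} (hu : u ∈ pspan F)
    (hu0 : u ≠ 0) : ∃ i, 0 < ⟪u, F i⟫ := by
  by_contra! h
  obtain ⟨c, hc, hsum⟩ := hu
  have hself : ⟪u, u⟫ = ∑ i, c i * ⟪u, F i⟫ := by
    nth_rw 2 [hsum]
    simp only [inner_sum, real_inner_smul_right]
  refine hu0 (real_inner_self_nonpos.mp ?_)
  rw [hself]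
  exact Finset.sum_nonpos fun i _ => mul_nonpos_of_nonneg_of_nonpos (hc i) (h i)

theorem subset_pspan_of_forall_exists_inner_pos {L : Submodule ℝ (Euc n)} {F : κ → Euc n}
    (hF : ∀ i, F i ∈ L) (h : ∀ u ∈ L, u ≠ 0 → ∃ i, 0 < ⟪u, F i⟫) :
    (L : Set (Euc n)) ⊆ pspan F := by
  intro x hx
  by_contra hxF
  let C : ProperCone ℝ (Euc n) :=
    { toSubmodule := PointedCone.hull ℝ (Set.range F)
      isClosed' := by have := isClosed_pspan F; rwa [pspan_eq_hull] at this }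
  obtain ⟨y, hy, hxy⟩ := C.hyperplane_separation' (x₀ := x) (by rwa [pspan_eq_hull] at hxF)
  -- Projecting the separating vector onto `L` keeps its inner products with vectors of `L`.
  set u := L.starProjection (-y)
  have hu : ∀ z ∈ L, ⟪u, z⟫ = -⟪z, y⟫ := fun z hz => by
    rw [Submodule.inner_starProjection_left_eq_right,
      Submodule.starProjection_eq_self_iff.mpr hz, inner_neg_left, real_inner_comm]
  have hux : 0 < ⟪u, x⟫ := by rw [hu x hx]; linarith
  obtain ⟨i, hi⟩ := h u (Submodule.starProjection_apply_mem L _)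
    (fun hu0 => by simp [hu0] at hux)
  have := hy (F i) (PointedCone.subset_hull ⟨i, rfl⟩)
  rw [hu (F i) (hF i)] at hi
  linarith

theorem subset_pspan_iff_forall_exists_inner_pos {L : Submodule ℝ (Euc n)} {F : κ → Euc n}
    (hF : ∀ i, F i ∈ L) :
    (L : Set (Euc n)) ⊆ pspan F ↔ ∀ u ∈ L, u ≠ 0 → ∃ i, 0 < ⟪u, F i⟫ :=
  ⟨fun hL _ hu hu0 => exists_inner_pos_of_mem_pspan (hL hu) hu0,
    subset_pspan_of_forall_exists_inner_pos hF⟩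

theorem exists_pos_sum_smul_eq_zero_of_neg_mem_pspan {F : κ → Euc n}
    (h : ∀ i, -F i ∈ pspan F) : ∃ c : κ → ℝ, (∀ i, 0 < c i) ∧ ∑ i, c i • F i = 0 := by
  choose w hw hneg using h
  refine ⟨fun j => 1 + ∑ i, w i j,
    fun j => add_pos_of_pos_of_nonneg one_pos (Finset.sum_nonneg fun i _ => hw i j), ?_⟩
  calc ∑ j, (1 + ∑ i, w i j) • F j = ∑ j, F j + ∑ i, ∑ j, w i j • F j := by
        simp only [add_smul, one_smul, Finset.sum_smul, Finset.sum_add_distrib]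
        rw [Finset.sum_comm]
    _ = ∑ j, F j + ∑ i, -F i := by simp only [← hneg]
    _ = 0 := by simp

theorem span_subset_pspan_of_pos_sum_smul_eq_zero {F : κ → Euc n} {c : κ → ℝ}
    (hc : ∀ i, 0 < c i) (hsum : ∑ i, c i • F i = 0) :
    (Submodule.span ℝ (Set.range F) : Set (Euc n)) ⊆ pspan F := by
  intro x hx
  obtain ⟨a, rfl⟩ := (Submodule.mem_span_range_iff_exists_fun ℝ).mp hx
  -- Adding a large enough multiple of the vanishing combination `c` makes all coefficients
  -- nonnegative.
  set t := ∑ j, |a j| / c j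
  refine ⟨fun i => a i + t * c i, fun i => ?_, ?_⟩
  · have hi : |a i| / c i ≤ t :=
      Finset.single_le_sum (fun j _ => div_nonneg (abs_nonneg _) (hc j).le) (Finset.mem_univ i)
    rw [div_le_iff₀ (hc i)] at hi
    linarith [neg_abs_le (a i)]
  · simp [add_smul, mul_smul, Finset.sum_add_distrib, ← Finset.smul_sum, hsum]

theorem subset_pspan_iff_le_span_and_exists_pos {L : Submodule ℝ (Euc n)} {F : κ → Euc n}
    (hF : ∀ i, F i ∈ L) :
    (L : Set (Euc n)) ⊆ pspan F ↔ L ≤ Submodule.span ℝ (Set.range F) ∧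
      ∃ c : κ → ℝ, (∀ i, 0 < c i) ∧ ∑ i, c i • F i = 0 :=
  ⟨fun hL => ⟨hL.trans (pspan_subset_span F),
      exists_pos_sum_smul_eq_zero_of_neg_mem_pspan fun i => hL (L.neg_mem (hF i))⟩,
    fun ⟨hspan, _, hc, hsum⟩ => (SetLike.coe_subset_coe.mpr hspan).trans
      (span_subset_pspan_of_pos_sum_smul_eq_zero hc hsum)⟩

end PositiveSpan

section PositiveKSpan

variable {n : ℕ} {ι : Type*}

theorem iInter_card_ge_eq_iff [Fintype ι] {E : Type*} {A : Finset ι → Set E} {B : Set E}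
    {m : ℕ} (hm : m ≤ Fintype.card ι) (huniv : A Finset.univ ⊆ B) :
    (⋂ (S : Finset ι) (_ : m ≤ S.card), A S) = B ↔ ∀ S : Finset ι, m ≤ S.card → B ⊆ A S :=
  ⟨fun h S hS => h ▸ Set.iInter₂_subset S hS,
    fun h => subset_antisymm ((Set.iInter₂_subset Finset.univ hm).trans huniv)
      (Set.subset_iInter₂ h)⟩

theorem exists_card_eq_forall_iff_forall_exists_mem [Fintype ι] (p : ι → Prop) {k : ℕ}
    (hk : k ≤ Fintype.card ι) :
    (∃ T : Finset ι, T.card = k ∧ ∀ i ∈ T, p i) ↔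
      ∀ S : Finset ι, Fintype.card ι - k + 1 ≤ S.card → ∃ i ∈ S, p i := by
  classical
  constructor
  · rintro ⟨T, hT, hp⟩ S hS
    obtain ⟨i, hiS, hiT⟩ : ∃ i ∈ S, i ∈ T := by
      by_contra! h
      have := Finset.card_union_of_disjoint (Finset.disjoint_left.mpr h)
      have := (S ∪ T).card_le_univ
      omega
    exact ⟨i, hiS, hp i hiT⟩
  · intro h
    have hP : k ≤ (Finset.univ.filter p).card := by
      by_contra! hP
      obtain ⟨i, hi, hpi⟩ := h (Finset.univ.filter p)ᶜ (by rw [Finset.card_compl]; omega)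
      simp only [Finset.mem_compl, Finset.mem_filter, Finset.mem_univ, true_and] at hi
      exact hi hpi
    obtain ⟨T, hTP, hT⟩ := Finset.exists_subset_card_eq hP
    exact ⟨T, hT, fun i hi => by simpa using hTP hi⟩

theorem pspan_subtype_mono (D : ι → Euc n) {S₀ S : Finset ι} (h : S₀ ⊆ S) :
    pspan (fun j : {j // j ∈ S₀} => D j) ⊆ pspan (fun j : {j // j ∈ S} => D j) := by
  rw [pspan_eq_hull, pspan_eq_hull]
  exact Submodule.span_mono (Set.range_subset_iff.mpr fun j => ⟨⟨j, h j.2⟩, rfl⟩)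

theorem subset_pspan_subtype_iff {L : Submodule ℝ (Euc n)} {D : ι → Euc n} {S : Finset ι}
    (hD : ∀ i ∈ S, D i ∈ L) :
    (L : Set (Euc n)) ⊆ pspan (fun j : {j // j ∈ S} => D j) ↔
      L ≤ Submodule.span ℝ (D '' S) ∧
        ∃ c : ι → ℝ, (∀ i ∈ S, 0 < c i) ∧ ∑ i ∈ S, c i • D i = 0 := by
  classical
  rw [subset_pspan_iff_le_span_and_exists_pos fun j : {j // j ∈ S} => hD j j.2,
    Set.image_eq_range]
  refine and_congr_right fun _ => ⟨fun ⟨c, hc, hsum⟩ => ?_, fun ⟨c, hc, hsum⟩ => ?_⟩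
  · refine ⟨fun i => if hi : i ∈ S then c ⟨i, hi⟩ else 0,
      fun i hi => by simpa [hi] using hc _, ?_⟩
    rw [← Finset.sum_coe_sort, ← hsum]
    exact Finset.sum_congr rfl fun j _ => by simp
  · exact ⟨fun j => c j, fun j => hc j j.2, by rwa [Finset.sum_coe_sort S fun i => c i • D i]⟩

variable [Fintype ι] {L : Submodule ℝ (Euc n)} {D : ι → Euc n} {k : ℕ}

theorem isPkSS_iff_forall_subset_pspan (hmem : ∀ i, D i ∈ L) (hk1 : 1 ≤ k)
    (hk2 : k ≤ Fintype.card ι) :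
    IsPkSS k D L ↔ ∀ S : Finset ι, Fintype.card ι - k + 1 ≤ S.card →
      (L : Set (Euc n)) ⊆ pspan (fun j : {j // j ∈ S} => D j) :=
  iInter_card_ge_eq_iff (by omega) ((pspan_subset_span _).trans
    (Submodule.span_le.mpr (Set.range_subset_iff.mpr fun j => hmem j)))

theorem spanK_eq_iff_forall_le_span (hmem : ∀ i, D i ∈ L) (hk1 : 1 ≤ k)
    (hk2 : k ≤ Fintype.card ι) :
    spanK k D = (L : Set (Euc n)) ↔ ∀ S : Finset ι, Fintype.card ι - k + 1 ≤ S.card →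
      L ≤ Submodule.span ℝ (D '' S) :=
  iInter_card_ge_eq_iff (by omega)
    (Submodule.span_le.mpr (Set.image_subset_iff.mpr fun i _ => hmem i))

theorem isPkSS_iff_forall_exists_inner_pos (hmem : ∀ i, D i ∈ L) (hk1 : 1 ≤ k)
    (hk2 : k ≤ Fintype.card ι) :
    IsPkSS k D L ↔
      ∀ u ∈ L, u ≠ 0 → ∃ T : Finset ι, T.card = k ∧ ∀ i ∈ T, 0 < ⟪u, D i⟫ := by
  have hS (S : Finset ι) : (L : Set (Euc n)) ⊆ pspan (fun j : {j // j ∈ S} => D j) ↔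
      ∀ u ∈ L, u ≠ 0 → ∃ i ∈ S, 0 < ⟪u, D i⟫ := by
    rw [subset_pspan_iff_forall_exists_inner_pos fun j : {j // j ∈ S} => hmem j]
    simp only [Subtype.exists, exists_prop]
  simp only [isPkSS_iff_forall_subset_pspan hmem hk1 hk2, hS,
    exists_card_eq_forall_iff_forall_exists_mem _ hk2]
  exact ⟨fun h u hu hu0 S hS => h S hS u hu hu0, fun h S hS u hu hu0 => h u hu hu0 S hS⟩

theorem isPkSS_iff_spanK_eq_and_exists_pos (hmem : ∀ i, D i ∈ L) (hk1 : 1 ≤ k)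
    (hk2 : k ≤ Fintype.card ι) :
    IsPkSS k D L ↔ spanK k D = (L : Set (Euc n)) ∧
      ∀ S : Finset ι, S.card = Fintype.card ι - k + 1 →
        ∃ c : ι → ℝ, (∀ i ∈ S, 0 < c i) ∧ ∑ i ∈ S, c i • D i = 0 := by
  have hS (S : Finset ι) := subset_pspan_subtype_iff (L := L) (S := S) fun i _ => hmem i
  rw [isPkSS_iff_forall_subset_pspan hmem hk1 hk2, spanK_eq_iff_forall_le_span hmem hk1 hk2]
  refine ⟨fun h => ⟨fun S hS' => ((hS S).mp (h S hS')).1,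
    fun S hS' => ((hS S).mp (h S hS'.ge)).2⟩, fun ⟨hspan, hpos⟩ S hS' => ?_⟩
  obtain ⟨S₀, hS₀S, hS₀⟩ := Finset.exists_subset_card_eq hS'
  exact ((hS S₀).mpr ⟨hspan S₀ hS₀.ge, hpos S₀ hS₀⟩).trans (pspan_subtype_mono D hS₀S)

end PositiveKSpan

theorem pkss_characterizations_general {n : ℕ} {ι : Type*} [Fintype ι]
    (L : Submodule ℝ (Euc n)) (D : ι → Euc n)
    (hmem : ∀ i, D i ∈ L)
    (k : ℕ) (hk1 : 1 ≤ k) (hk2 : k ≤ Fintype.card ι) :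
    (IsPkSS k D L ↔
      ∀ u ∈ L, u ≠ 0 → ∃ T : Finset ι, T.card = k ∧ ∀ i ∈ T, 0 < ⟪u, D i⟫) ∧
    (IsPkSS k D L ↔
      spanK k D = (L : Set (Euc n)) ∧
      ∀ S : Finset ι, S.card = Fintype.card ι - k + 1 →
        ∃ c : ι → ℝ, (∀ i ∈ S, 0 < c i) ∧ ∑ i ∈ S, c i • D i = 0) :=
  ⟨isPkSS_iff_forall_exists_inner_pos hmem hk1 hk2,
    isPkSS_iff_spanK_eq_and_exists_pos hmem hk1 hk2⟩

/-- Lemma 4.3: characterizations of positive `k`-spanning sets: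
(i) `D` is a PkSS of `L`; (ii) every nonzero `u ∈ L` makes a positive dot product
with at least `k` elements of `D` (counted with multiplicity); (iii) the `k`-span of
`D` is `L` and, for every subfamily `S` of cardinality `|D| - k + 1`, zero is a
strictly positive combination of the elements of `S`. -/
theorem pkss_characterizations {n : ℕ} {ι : Type*} [Fintype ι]
    (L : Submodule ℝ (Euc n)) (D : ι → Euc n)
    (hmem : ∀ i, D i ∈ L) (h0 : ∀ i, D i ≠ 0)
    (k : ℕ) (hk1 : 1 ≤ k) (hk2 : k ≤ Fintype.card ι) :
    (IsPkSS k D L ↔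
      ∀ u ∈ L, u ≠ 0 → ∃ T : Finset ι, T.card = k ∧ ∀ i ∈ T, 0 < ⟪u, D i⟫) ∧
    (IsPkSS k D L ↔
      spanK k D = (L : Set (Euc n)) ∧
      ∀ S : Finset ι, S.card = Fintype.card ι - k + 1 →
        ∃ c : ι → ℝ, (∀ i ∈ S, 0 < c i) ∧ ∑ i ∈ S, c i • D i = 0) :=
  pkss_characterizations_general L D hmem k hk1 hk2
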